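/- If c > 0 satisfies G(c) = 1, then a < c < p·a + (1-p)·b; in particular the combined hazard ratio c*_PL is strictly larger than the smaller trial hazard ratio a and strictly smaller than the linear hazard-ratio combination c_L = p·a + (1-p)·b (hence also smaller than b). -/

import Mathlib

/-!
Since `∫₀^∞ e^{-u} du = 1`, the equation `G(c) = 1` is impossible when `N / D_c - 1` has a
constant strict sign on `(0, ∞)`. If `c ≤ a`, then `N > D_c` everywhere. If `c ≥ c_L`, then
`D_c - N = q (c - c_L) (p e^{-au} + (1-p) e^{-bu}) + p (1-p) q (b - a) (e^{-au} - e^{-bu})`,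
which is positive for `u > 0`.
-/

open Real MeasureTheory Set

theorem setIntegral_lt_setIntegral_of_forall_lt {X : Type*} [MeasurableSpace X] {μ : Measure X}
    {s : Set X} {f g : X → ℝ} (hs : MeasurableSet s) (hμs : μ s ≠ 0)
    (hf : IntegrableOn f s μ) (hg : IntegrableOn g s μ) (hlt : ∀ x ∈ s, f x < g x) :
    ∫ x in s, f x ∂μ < ∫ x in s, g x ∂μ := by
  rw [← sub_pos, ← integral_sub hg hf]
  have hsupport : Function.support (fun x ↦ g x - f x) ∩ s = s :=
    inter_eq_right.2 fun x hx ↦ (sub_pos.2 (hlt x hx)).ne'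
  rw [setIntegral_pos_iff_support_of_nonneg_ae (f := fun x ↦ g x - f x) _ (hg.sub hf), hsupport]
  · exact pos_iff_ne_zero.2 hμs
  · filter_upwards [ae_restrict_mem hs] with x hx
    exact (sub_pos.2 (hlt x hx)).le

namespace CombinedHazard

/-- `mix p q a b a b` is the paper's `N`, and `mix p q a b c c` is `D_c`. -/
noncomputable def mix (p q a b α β u : ℝ) : ℝ :=
  (1 - q) * exp (-u) + p * q * α * exp (-(a * u)) + (1 - p) * q * β * exp (-(b * u))

variable {p q a b c u : ℝ}

theorem mix_pos {α β : ℝ} (hp0 : 0 ≤ p) (hp1 : p ≤ 1) (hq0 : 0 ≤ q) (hq1 : q < 1)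
    (hα : 0 ≤ α) (hβ : 0 ≤ β) : 0 < mix p q a b α β u := by
  have hp1' : 0 ≤ 1 - p := sub_nonneg.2 hp1
  have hq1' : 0 < 1 - q := sub_pos.2 hq1
  unfold mix
  positivity

theorem mix_sub_mix (α β α' β' : ℝ) :
    mix p q a b α β u - mix p q a b α' β' u =
      q * (p * (α - α') * exp (-(a * u)) + (1 - p) * (β - β') * exp (-(b * u))) := by
  unfold mix
  ring

theorem mix_lt_mix_of_le_left (hc : c ≤ a) (hab : a < b) (hp0 : 0 ≤ p) (hp1 : p < 1)
    (hq0 : 0 < q) : mix p q a b c c u < mix p q a b a b u := by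
  rw [← sub_neg, mix_sub_mix]
  have hfirst : p * (c - a) * exp (-(a * u)) ≤ 0 :=
    mul_nonpos_of_nonpos_of_nonneg (mul_nonpos_of_nonneg_of_nonpos hp0 (sub_nonpos.2 hc))
      (exp_pos _).le
  have hsecond : (1 - p) * (c - b) * exp (-(b * u)) < 0 :=
    mul_neg_of_neg_of_pos (mul_neg_of_pos_of_neg (sub_pos.2 hp1) (by linarith)) (exp_pos _)
  exact mul_neg_of_pos_of_neg hq0 (by linarith)

theorem mix_lt_mix_of_linear_le (hc : p * a + (1 - p) * b ≤ c) (hab : a < b) (hp0 : 0 < p)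
    (hp1 : p < 1) (hq0 : 0 < q) (hu : 0 < u) : mix p q a b a b u < mix p q a b c c u := by
  rw [← sub_pos, mix_sub_mix]
  have hexp : exp (-(b * u)) < exp (-(a * u)) :=
    exp_lt_exp.2 (neg_lt_neg (mul_lt_mul_of_pos_right hab hu))
  have hsplit : p * (c - a) * exp (-(a * u)) + (1 - p) * (c - b) * exp (-(b * u)) =
      (c - (p * a + (1 - p) * b)) * (p * exp (-(a * u)) + (1 - p) * exp (-(b * u))) +
        p * (1 - p) * (b - a) * (exp (-(a * u)) - exp (-(b * u))) := by
    ring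
  have hp1' : 0 < 1 - p := sub_pos.2 hp1
  have hlinear : 0 ≤ (c - (p * a + (1 - p) * b)) *
      (p * exp (-(a * u)) + (1 - p) * exp (-(b * u))) :=
    mul_nonneg (sub_nonneg.2 hc) (by positivity)
  have hspread : 0 < p * (1 - p) * (b - a) * (exp (-(a * u)) - exp (-(b * u))) :=
    mul_pos (mul_pos (mul_pos hp0 hp1') (sub_pos.2 hab)) (sub_pos.2 hexp)
  rw [hsplit]
  exact mul_pos hq0 (add_pos_of_nonneg_of_pos hlinear hspread)

end CombinedHazard

open CombinedHazard in
theorem combined_hazard_root_between_general (a b p q c : ℝ) (hab : a < b)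
    (hp : p ∈ Set.Ioo (0 : ℝ) 1) (hq : q ∈ Set.Ioo (0 : ℝ) 1) (hc : 0 < c)
    (hroot : (∫ u in Set.Ioi (0 : ℝ),
        ((1 - q) * exp (-u) + p * q * a * exp (-(a * u)) + (1 - p) * q * b * exp (-(b * u))) /
          ((1 - q) * exp (-u) + p * q * c * exp (-(a * u)) + (1 - p) * q * c * exp (-(b * u))) *
          exp (-u)) = 1) :
    a < c ∧ c < p * a + (1 - p) * b := by
  obtain ⟨hp0, hp1⟩ := hp
  obtain ⟨hq0, hq1⟩ := hq
  have hD : ∀ u, 0 < mix p q a b c c u := fun u ↦ mix_pos hp0.le hp1.le hq0.le hq1 hc.le hc.le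
  have hG : IntegrableOn (fun u ↦ mix p q a b a b u / mix p q a b c c u * exp (-u)) (Ioi 0) :=
    Integrable.of_integral_ne_zero (ne_of_eq_of_ne hroot one_ne_zero)
  have hexp : IntegrableOn (fun u : ℝ ↦ exp (-u)) (Ioi 0) := by
    simpa using exp_neg_integrableOn_Ioi (0 : ℝ) one_pos
  have hvol : volume (Ioi (0 : ℝ)) ≠ 0 := by simp
  have hG_eq : ∫ u in Ioi 0, mix p q a b a b u / mix p q a b c c u * exp (-u) =
      ∫ u in Ioi 0, exp (-u) :=
    hroot.trans integral_exp_neg_Ioi_zero.symm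
  constructor
  · by_contra! hca
    refine (setIntegral_lt_setIntegral_of_forall_lt measurableSet_Ioi hvol hexp hG
      fun u _ ↦ ?_).ne' hG_eq
    exact lt_mul_of_one_lt_left (exp_pos _)
      ((one_lt_div (hD u)).2 (mix_lt_mix_of_le_left hca hab hp0.le hp1 hq0))
  · by_contra! hcL
    refine (setIntegral_lt_setIntegral_of_forall_lt measurableSet_Ioi hvol hG hexp
      fun u hu ↦ ?_).ne hG_eq
    exact mul_lt_of_lt_one_left (exp_pos _)
      ((div_lt_one (hD u)).2 (mix_lt_mix_of_linear_le hcL hab hp0 hp1 hq0 hu))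

/-- If `c > 0` satisfies `G(c) = 1`, then `a < c < p·a + (1-p)·b`: the combined hazard
ratio is strictly larger than the smaller trial hazard ratio `a` and strictly smaller
than the linear hazard-ratio combination `c_L = p·a + (1-p)·b`. -/
theorem combined_hazard_root_between (a b p q c : ℝ) (ha : 0 < a) (hab : a < b)
    (hp : p ∈ Set.Ioo (0 : ℝ) 1) (hq : q ∈ Set.Ioo (0 : ℝ) 1) (hc : 0 < c)
    (hroot : (∫ u in Set.Ioi (0 : ℝ),
        ((1 - q) * exp (-u) + p * q * a * exp (-(a * u)) + (1 - p) * q * b * exp (-(b * u))) /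
          ((1 - q) * exp (-u) + p * q * c * exp (-(a * u)) + (1 - p) * q * c * exp (-(b * u))) *
          exp (-u)) = 1) :
    a < c ∧ c < p * a + (1 - p) * b :=
  combined_hazard_root_between_general a b p q c hab hp hq hc hroot
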